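/- arXiv:1101.4979 — 8 statements merged into one kernel-verified Lean document; each statement's English description precedes it below -/
import Mathlib

section
/- Let S : Ω → Ω be a measure preserving transformation such that ∫_Ω H(x, S(x)) dx = 0 for every integrable anti-symmetric function H on Ω × Ω. Then S∘S = id almost everywhere on Ω. -/
open MeasureTheory Set

/-- If `S : Ω → Ω` is measure preserving and `∫_Ω H(x, S x) dx = 0` for every
integrable anti-symmetric function `H` on `Ω × Ω`, then `S ∘ S = id` almost
everywhere on `Ω`. -/
theorem involution_of_selfdual
    {N : ℕ} (Ω : Set (EuclideanSpace ℝ (Fin N)))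
    (hΩopen : IsOpen Ω) (hΩbdd : Bornology.IsBounded Ω)
    (S : EuclideanSpace ℝ (Fin N) → EuclideanSpace ℝ (Fin N))
    (hSmaps : MapsTo S Ω Ω)
    (hS : MeasurePreserving S (volume.restrict Ω) (volume.restrict Ω))
    (hsd : ∀ H : EuclideanSpace ℝ (Fin N) → EuclideanSpace ℝ (Fin N) → ℝ,
      Integrable (fun q : EuclideanSpace ℝ (Fin N) × EuclideanSpace ℝ (Fin N) =>
        H q.1 q.2) ((volume.restrict Ω).prod (volume.restrict Ω)) →
      (∀ x y, H x y = - H y x) →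
      ∫ x, H x (S x) ∂(volume.restrict Ω) = 0) :
    ∀ᵐ x ∂(volume.restrict Ω), S (S x) = x := by
  set μ := volume.restrict Ω with hμ
  have hΩmeas : MeasurableSet Ω := hΩopen.measurableSet
  haveI : IsFiniteMeasure μ := by
    constructor
    rw [hμ, Measure.restrict_apply_univ]
    exact hΩbdd.measure_lt_top
  obtain ⟨R, hR⟩ := hΩbdd.exists_norm_le
  -- the anti-symmetric kernel
  set H : EuclideanSpace ℝ (Fin N) → EuclideanSpace ℝ (Fin N) → ℝ :=
    fun x y => ‖S x - y‖ - ‖S y - x‖ with hH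
  have hanti : ∀ x y, H x y = - H y x := by
    intro x y; simp only [hH]; ring
  have hSm : Measurable S := hS.measurable
  have hmeasH : Measurable (fun q : EuclideanSpace ℝ (Fin N) × EuclideanSpace ℝ (Fin N) =>
      H q.1 q.2) := by
    apply Measurable.sub
    · exact ((hSm.comp measurable_fst).sub measurable_snd).norm
    · exact ((hSm.comp measurable_snd).sub measurable_fst).norm
  have haeprod : ∀ᵐ q ∂(μ.prod μ), q.1 ∈ Ω ∧ q.2 ∈ Ω := by
    rw [hμ, Measure.prod_restrict]
    filter_upwards [ae_restrict_mem (hΩmeas.prod hΩmeas)] with q hq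
    exact hq
  have hint : Integrable (fun q : EuclideanSpace ℝ (Fin N) × EuclideanSpace ℝ (Fin N) =>
      H q.1 q.2) (μ.prod μ) := by
    apply Integrable.mono' (integrable_const (4 * R)) hmeasH.aestronglyMeasurable
    filter_upwards [haeprod] with q ⟨h1, h2⟩
    have hb : ∀ a b : EuclideanSpace ℝ (Fin N), a ∈ Ω → b ∈ Ω → ‖S a - b‖ ≤ 2 * R := by
      intro a b ha hb
      calc ‖S a - b‖ ≤ ‖S a‖ + ‖b‖ := norm_sub_le _ _
        _ ≤ R + R := add_le_add (hR _ (hSmaps ha)) (hR _ hb)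
        _ = 2 * R := by ring
    have := hb q.1 q.2 h1 h2
    have := hb q.2 q.1 h2 h1
    rw [Real.norm_eq_abs, abs_le]
    constructor <;> simp only [hH] <;> nlinarith [norm_nonneg (S q.1 - q.2), norm_nonneg (S q.2 - q.1)]
  have h0 := hsd H hint hanti
  have hx0 : ∫ x, ‖S (S x) - x‖ ∂μ = 0 := by
    have : (fun x => H x (S x)) = fun x => -‖S (S x) - x‖ := by
      funext x; simp [hH]
    rw [this, integral_neg, neg_eq_zero] at h0
    exact h0
  have hintg : Integrable (fun x => ‖S (S x) - x‖) μ := by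
    apply Integrable.mono' (integrable_const (2 * R))
      (((hSm.comp hSm).sub measurable_id).norm).aestronglyMeasurable
    filter_upwards [ae_restrict_mem hΩmeas] with x hx
    have hxx : S (S x) ∈ Ω := hSmaps (hSmaps hx)
    rw [Real.norm_eq_abs, abs_of_nonneg (norm_nonneg _)]
    calc ‖S (S x) - x‖ ≤ ‖S (S x)‖ + ‖x‖ := norm_sub_le _ _
      _ ≤ R + R := add_le_add (hR _ hxx) (hR _ hx)
      _ = 2 * R := by ring
  have hae : (fun x => ‖S (S x) - x‖) =ᵐ[μ] 0 := by
    rw [← integral_eq_zero_iff_of_nonneg (fun x => norm_nonneg _) hintg]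
    exact hx0
  filter_upwards [hae] with x hx
  have : S (S x) - x = 0 := norm_eq_zero.mp hx
  exact sub_eq_zero.mp this
end

section
/- The linear map S(x₁,x₂) = (x₂,−x₁) on ℝ² is measure preserving, but taking H_J(x,y) = ⟨Jx,y⟩ with J(x₁,x₂) = (−x₂,x₁), one has ∫_B H_J(x, S(x)) dx = −∫_B ‖x‖² dx ≠ 0 for B the unit ball; hence S is not a self-dual transformation. -/
open MeasureTheory Set

/-- The rotation `S(x₁,x₂) = (x₂, -x₁)` of `ℝ²` is measure preserving, yet for the
anti-symmetric function `H_J(x,y) = ⟨Jx, y⟩` with `J(x₁,x₂) = (-x₂,x₁)` one has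
`∫_B H_J(x, Sx) dx = -∫_B ‖x‖² dx ≠ 0` over the unit ball `B`; hence `S` is not a
self-dual transformation. -/
theorem rotation_not_selfdual :
    let S : ℝ × ℝ → ℝ × ℝ := fun x => (x.2, -x.1)
    let J : ℝ × ℝ → ℝ × ℝ := fun x => (-x.2, x.1)
    let HJ : ℝ × ℝ → ℝ × ℝ → ℝ := fun x y => (J x).1 * y.1 + (J x).2 * y.2
    let B : Set (ℝ × ℝ) := Metric.ball (0 : ℝ × ℝ) 1
    MeasurePreserving S volume volume ∧
    (∀ x y, HJ x y = - HJ y x) ∧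
    (∫ x in B, HJ x (S x)) = - ∫ x in B, (x.1 ^ 2 + x.2 ^ 2) ∧
    (∫ x in B, HJ x (S x)) ≠ 0 := by
  intro S J HJ B
  have hcont : Continuous (fun x : ℝ × ℝ => x.1 ^ 2 + x.2 ^ 2) := by continuity
  have hint : IntegrableOn (fun x : ℝ × ℝ => x.1 ^ 2 + x.2 ^ 2) B := by
    exact (hcont.locallyIntegrable.integrableOn_isCompact (isCompact_closedBall 0 1)).mono_set
      Metric.ball_subset_closedBall
  have hpos : 0 < ∫ x in B, (x.1 ^ 2 + x.2 ^ 2) := by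
    rw [setIntegral_pos_iff_support_of_nonneg_ae _ hint]
    · have hsub : B \ {(0 : ℝ × ℝ)} ⊆
          Function.support (fun x : ℝ × ℝ => x.1 ^ 2 + x.2 ^ 2) ∩ B := by
        rintro ⟨a, b⟩ ⟨hB, hne⟩
        refine ⟨?_, hB⟩
        simp only [Function.mem_support]
        intro h
        apply hne
        have ha : a = 0 := by nlinarith [sq_nonneg a, sq_nonneg b]
        have hb : b = 0 := by nlinarith [sq_nonneg a, sq_nonneg b]
        simp [ha, hb]
      have h0 : (0 : ENNReal) < volume (B \ {(0 : ℝ × ℝ)}) := by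
        rw [measure_diff_null (measure_singleton _)]
        exact Metric.measure_ball_pos _ _ one_pos
      exact h0.trans_le (measure_mono hsub)
    · filter_upwards with x
      positivity
  have hSeq : (fun x : ℝ × ℝ => HJ x (S x)) = fun x => -(x.1 ^ 2 + x.2 ^ 2) := by
    funext x
    simp only [HJ, S, J]
    ring
  have hMP : MeasurePreserving S volume volume := by
    have h1 : MeasurePreserving (Prod.swap : ℝ × ℝ → ℝ × ℝ) volume volume :=
      Measure.measurePreserving_swap
    have h2 : MeasurePreserving (Prod.map (id : ℝ → ℝ) (Neg.neg : ℝ → ℝ))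
        (volume : Measure (ℝ × ℝ)) volume :=
      (MeasurePreserving.id _).prod (Measure.measurePreserving_neg _)
    have : S = (Prod.map (id : ℝ → ℝ) (Neg.neg : ℝ → ℝ)) ∘ Prod.swap := by
      funext x; rfl
    rw [this]
    exact h2.comp h1
  refine ⟨hMP, ?_, ?_, ?_⟩
  · intro x y; simp only [HJ, J]; ring
  · rw [hSeq, integral_neg]
  · rw [hSeq, integral_neg]
    exact neg_ne_zero.mpr hpos.ne'
end

section
/- If U is a real unitary N×N matrix (U U^T = I) such that the linear transformation x ↦ Ux is self-dual (i.e., ⟨Ax, Ux⟩ integrates to zero over the unit ball for every anti-symmetric bilinear form ⟨A·,·⟩ with A^T = −A), then U is symmetric and U² = I. -/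
/-!
Take `A = U - Uᵀ`. Since `U` is orthogonal, `⟪(U - Uᵀ) x, U x⟫ = ‖x‖² - ⟪x, U² x⟫ = ‖x - U² x‖² / 2`,
so self-duality for this `A` says that a continuous nonnegative function has zero integral over
the unit ball. It therefore vanishes on the ball, i.e. `U² x = x` there, and `U² = 1` by
linearity. Finally `Uᵀ = U² Uᵀ = U`.
-/

open MeasureTheory Matrix Set Filter Topology

open scoped RealInnerProductSpace

theorem ContinuousOn.eqOn_zero_of_setIntegral_eq_zero {X : Type*} [TopologicalSpace X]
    [MeasurableSpace X] [OpensMeasurableSpace X] {μ : Measure X} [μ.IsOpenPosMeasure]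
    {s : Set X} {f : X → ℝ} (hs : IsOpen s) (hf : ContinuousOn f s) (hf₀ : ∀ x ∈ s, 0 ≤ f x)
    (hfi : IntegrableOn f s μ) (h : ∫ x in s, f x ∂μ = 0) : EqOn f 0 s :=
  Measure.eqOn_open_of_ae_eq
    ((setIntegral_eq_zero_iff_of_nonneg_ae (ae_restrict_of_forall_mem hs.measurableSet hf₀)
      hfi).1 h) hs hf continuousOn_const

theorem LinearMap.ext_of_eqOn_of_nonempty_interior {R M N : Type*} [Ring R] [TopologicalSpace R]
    [TopologicalSpace M] [AddCommGroup M] [ContinuousAdd M] [Module R M] [ContinuousSMul R M]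
    [NeBot (𝓝[{x : R | IsUnit x}] 0)] [AddCommGroup N] [Module R N] {f g : M →ₗ[R] N}
    {s : Set M} (hs : (interior s).Nonempty) (h : EqOn f g s) : f = g := by
  have : eqLocus f g = ⊤ := (eqLocus f g).eq_top_of_nonempty_interior' (hs.mono (interior_mono h))
  exact ext fun x => mem_eqLocus.1 (this ▸ Submodule.mem_top)

theorem ContinuousLinearMap.inner_sub_star_apply_apply_of_mem_unitary {H : Type*}
    [NormedAddCommGroup H] [InnerProductSpace ℝ H] [CompleteSpace H] {u : H →L[ℝ] H}
    (hu : u ∈ unitary (H →L[ℝ] H)) (x : H) :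
    ⟪(u - star u) x, u x⟫ = ‖x - u (u x)‖ ^ 2 / 2 := by
  rw [_root_.sub_apply, inner_sub_left, inner_map_map_of_mem_unitary hu, star_eq_adjoint,
    adjoint_inner_left, norm_sub_sq_real, norm_map_of_mem_unitary hu,
    norm_map_of_mem_unitary hu, real_inner_self_eq_norm_sq]
  ring

/-- If `U` is a real orthogonal `N × N` matrix such that `x ↦ Ux` is a self-dual
transformation (i.e. `∫_B ⟨Ax, Ux⟩ dx = 0` over the unit ball for every
anti-symmetric matrix `A`), then `U` is symmetric and `U² = I`. -/
theorem selfdual_unitary_is_symmetric_involution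
    {N : ℕ} (U : Matrix (Fin N) (Fin N) ℝ)
    (hU : U * Uᵀ = 1)
    (hsd : ∀ A : Matrix (Fin N) (Fin N) ℝ, Aᵀ = -A →
      (∫ x in Metric.ball (0 : EuclideanSpace ℝ (Fin N)) 1,
        (inner ℝ (Matrix.toEuclideanLin A x) (Matrix.toEuclideanLin U x) : ℝ)) = 0) :
    Uᵀ = U ∧ U * U = 1 := by
  have hstar : star U = Uᵀ := by rw [star_eq_conjTranspose, conjTranspose_eq_transpose_of_trivial]
  set T := toEuclideanCLM (n := Fin N) (𝕜 := ℝ) U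
  have hT : T ∈ unitary _ := Unitary.map_mem _ (mem_unitaryGroup_iff.2 (hstar ▸ hU))
  have hintegrand (x : EuclideanSpace ℝ (Fin N)) :
      ⟪toEuclideanLin (U - Uᵀ) x, toEuclideanLin U x⟫ = ‖x - T (T x)‖ ^ 2 / 2 := by
    rw [← T.inner_sub_star_apply_apply_of_mem_unitary hT, ← map_star, ← map_sub, hstar]
    rfl
  have hint : ∫ x in Metric.ball (0 : EuclideanSpace ℝ (Fin N)) 1, ‖x - T (T x)‖ ^ 2 / 2 = 0 := by
    simpa only [hintegrand] using hsd (U - Uᵀ) (by rw [transpose_sub, transpose_transpose, neg_sub])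
  have hcont : Continuous fun x => ‖x - T (T x)‖ ^ 2 / 2 := by fun_prop
  have hzero := hcont.continuousOn.eqOn_zero_of_setIntegral_eq_zero Metric.isOpen_ball
    (fun x _ => by positivity)
    ((hcont.continuousOn.integrableOn_compact (isCompact_closedBall 0 1)).mono_set
      Metric.ball_subset_closedBall) hint
  have hTT : T * T = 1 := by
    refine ContinuousLinearMap.coe_injective (LinearMap.ext_of_eqOn_of_nonempty_interior
      (s := Metric.ball 0 1) (by simp [Metric.isOpen_ball.interior_eq]) fun x hx => ?_)
    have h : ‖x - T (T x)‖ ^ 2 / 2 = 0 := hzero hx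
    have hfix : x - T (T x) = 0 := by simpa using h
    simpa using (sub_eq_zero.1 hfix).symm
  have hUU : U * U = 1 := toEuclideanCLM.injective (by rw [map_mul, map_one]; exact hTT)
  exact ⟨(left_inv_eq_right_inv hUU hU).symm, hUU⟩
end

section
/- Let A be an N×N real matrix with symmetric part A_s = (A+A^T)/2 and anti-symmetric part A_a = (A−A^T)/2. Write A_s = RS where R is symmetric positive semidefinite and S is orthogonal (polar decomposition). Then S is symmetric, S² = I, and Ax = ∇₁H(Sx, x) for all x ∈ ℝ^N, where H(x,y) = ½⟨Rx,x⟩ − ½⟨Ry,y⟩ − ⟨A_a x, y⟩. -/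
/-!
Diagonalising `A_s`, take `R = |A_s|` and `S = sgn(A_s)` (functional calculus). Then
`R S = A_s`, and `S² = 1` because `sgn² = 1`. Since `R` is symmetric, the gradient of
`H(·, x)` at `S x` is `R S x - A_aᵀ x = A_s x + A_a x = A x`.
-/

open Matrix

namespace Matrix.IsHermitian

variable {𝕜 n : Type*} [RCLike 𝕜] [Fintype n] [DecidableEq n]

open scoped MatrixOrder ComplexOrder in
theorem exists_posSemidef_mul_involution {M : Matrix n n 𝕜} (hM : M.IsHermitian) :
    ∃ R S : Matrix n n 𝕜, R.PosSemidef ∧ Sᴴ = S ∧ S * S = 1 ∧ M = R * S := by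
  have hcont (f : ℝ → ℝ) : ContinuousOn f (spectrum ℝ M) :=
    M.finite_real_spectrum.continuousOn f
  -- unlike `SignType.sign`, this sign is `1` at `0`, so that `sgn² = 1`
  set sgn : ℝ → ℝ := fun x => if x < 0 then -1 else 1
  refine ⟨cfc (fun x : ℝ => |x|) M, cfc sgn M,
    (cfc_nonneg fun x _ => abs_nonneg (x : ℝ)).posSemidef, (cfc_predicate sgn M).star_eq,
    ?_, ?_⟩
  · rw [← cfc_mul sgn sgn M (hcont _) (hcont _), ← cfc_one ℝ M]
    exact cfc_congr fun x _ => by by_cases h : x < 0 <;> simp [sgn, h]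
  · rw [← cfc_mul _ _ M (hcont _) (hcont _)]
    conv_lhs => rw [← cfc_id' ℝ M]
    refine cfc_congr fun x _ => ?_
    by_cases h : x < 0
    · simp [sgn, h, abs_of_neg h]
    · simp [sgn, h, abs_of_nonneg (not_lt.mp h)]

end Matrix.IsHermitian

namespace ContinuousLinearMap

variable {E : Type*} [NormedAddCommGroup E] [InnerProductSpace ℝ E] [CompleteSpace E]

theorem hasGradientAt_half_inner_self_sub_inner {T : E →L[ℝ] E}
    (hT : IsSelfAdjoint T) (B : E →L[ℝ] E) (c : ℝ) (x p : E) :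
    HasGradientAt (fun z => (1 / 2 : ℝ) * inner ℝ (T z) z - c - inner ℝ (B z) x)
      (T p - adjoint B x) p := by
  rw [hasGradientAt_iff_hasFDerivAt]
  have hquad := (T.hasFDerivAt.inner ℝ (hasFDerivAt_id p)).const_mul (1 / 2 : ℝ)
  have hlin := B.hasFDerivAt.inner ℝ (hasFDerivAt_const x p)
  refine ((hquad.sub_const c).sub hlin).congr_fderiv ?_
  ext v
  simp only [one_div, id_eq, _root_.sub_apply, _root_.smul_apply, comp_apply, prod_apply,
    id_apply, fderivInnerCLM_apply, smul_eq_mul, _root_.zero_apply, inner_zero_right, zero_add,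
    map_sub, InnerProductSpace.toDual_apply_apply, adjoint_inner_left]
  have hsymm : inner ℝ (T v) p = inner ℝ (T p) v :=
    (T.isSelfAdjoint_iff_isSymmetric.mp hT v p).trans (real_inner_comm _ _)
  rw [hsymm, real_inner_comm x]
  ring

end ContinuousLinearMap

/-- Any real `N × N` matrix `A` decomposes via the polar decomposition of its
symmetric part `A_s = (A + Aᵀ)/2 = R * S` (`R` symmetric positive semidefinite, `S`
orthogonal): `S` can be chosen symmetric with `S² = I`, and with
`H(x,y) = ½⟨Rx,x⟩ - ½⟨Ry,y⟩ - ⟨A_a x, y⟩` (where `A_a = (A - Aᵀ)/2`) one has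
`Ax = ∇₁H(Sx, x)` for all `x`. -/
theorem matrix_selfdual_factorization
    {N : ℕ} (A : Matrix (Fin N) (Fin N) ℝ) :
    ∃ R S : Matrix (Fin N) (Fin N) ℝ,
      R.IsSymm ∧ R.PosSemidef ∧ S * Sᵀ = 1 ∧
      (1 / 2 : ℝ) • (A + Aᵀ) = R * S ∧
      Sᵀ = S ∧ S * S = 1 ∧
      ∀ x : EuclideanSpace ℝ (Fin N),
        HasGradientAt
          (fun z : EuclideanSpace ℝ (Fin N) =>
            (1 / 2 : ℝ) * (inner ℝ (Matrix.toEuclideanLin R z) z : ℝ)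
              - (1 / 2 : ℝ) * (inner ℝ (Matrix.toEuclideanLin R x) x : ℝ)
              - (inner ℝ (Matrix.toEuclideanLin ((1 / 2 : ℝ) • (A - Aᵀ)) z) x : ℝ))
          (Matrix.toEuclideanLin A x)
          (Matrix.toEuclideanLin S x) := by
  have hsymm : ((1 / 2 : ℝ) • (A + Aᵀ)).IsHermitian :=
    isHermitian_iff_isSymm.mpr ((isSymm_add_transpose_self A).smul _)
  obtain ⟨R, S, hR, hS, hSS, hRS⟩ := hsymm.exists_posSemidef_mul_involution
  rw [conjTranspose_eq_transpose_of_trivial] at hS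
  refine ⟨R, S, isHermitian_iff_isSymm.mp hR.isHermitian, hR, by rw [hS, hSS], hRS, hS, hSS,
    fun x => ?_⟩
  have hdecomp : R * S - star ((1 / 2 : ℝ) • (A - Aᵀ)) = A := by
    rw [← hRS, star_eq_conjTranspose, conjTranspose_eq_transpose_of_trivial, transpose_smul,
      transpose_sub, transpose_transpose]
    module
  have hgrad : toEuclideanCLM (𝕜 := ℝ) R (toEuclideanCLM (𝕜 := ℝ) S x)
      - (toEuclideanCLM (𝕜 := ℝ) ((1 / 2 : ℝ) • (A - Aᵀ))).adjoint x
        = toEuclideanCLM (𝕜 := ℝ) A x := by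
    conv_rhs => rw [← hdecomp]
    rw [map_sub, map_mul, map_star, ContinuousLinearMap.star_eq_adjoint]
    rfl
  have h := ContinuousLinearMap.hasGradientAt_half_inner_self_sub_inner
    (hR.isHermitian.isSelfAdjoint.map (toEuclideanCLM (𝕜 := ℝ)))
    (toEuclideanCLM (𝕜 := ℝ) ((1 / 2 : ℝ) • (A - Aᵀ)))
    ((1 / 2 : ℝ) * inner ℝ (toEuclideanLin R x) x) x (toEuclideanCLM (𝕜 := ℝ) S x)
  rwa [hgrad] at h
end

section
/- For H ∈ C(Ω̄ × Ω̄) with H(x,y) ≤ −H(y,x), define L_H(x,p) = sup_{y ∈ Ω̄} {⟨y,p⟩ − H(y,x)} and its restricted Fenchel dual L_H*(q,y) = sup_{x ∈ Ω̄, p ∈ B_R} {⟨y,p⟩ + ⟨q,x⟩ − L_H(x,p)}. Then L_H*(p,x) ≤ L_H(x,p) for all x ∈ Ω̄ and p ∈ B_R. -/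
open MeasureTheory Set

noncomputable section

variable {N : ℕ}

/-- `L_H(x,p) = sup_{y ∈ Ω̄} {⟨y,p⟩ - H(y,x)}`. -/
def LH (Ω : Set (EuclideanSpace ℝ (Fin N)))
    (H : EuclideanSpace ℝ (Fin N) → EuclideanSpace ℝ (Fin N) → ℝ)
    (x p : EuclideanSpace ℝ (Fin N)) : ℝ :=
  ⨆ y : closure Ω, ((inner ℝ (y : EuclideanSpace ℝ (Fin N)) p : ℝ) - H y x)

/-- Restricted Fenchel dual `L_H*(q,y) = sup_{x ∈ Ω̄, p ∈ B_R} {⟨y,p⟩ + ⟨q,x⟩ - L_H(x,p)}`. -/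
def LHstar (Ω : Set (EuclideanSpace ℝ (Fin N))) (R : ℝ)
    (H : EuclideanSpace ℝ (Fin N) → EuclideanSpace ℝ (Fin N) → ℝ)
    (q y : EuclideanSpace ℝ (Fin N)) : ℝ :=
  ⨆ x : closure Ω, ⨆ p : Metric.closedBall (0 : EuclideanSpace ℝ (Fin N)) R,
    ((inner ℝ y (p : EuclideanSpace ℝ (Fin N)) : ℝ)
      + (inner ℝ q (x : EuclideanSpace ℝ (Fin N)) : ℝ) - LH Ω H x p)

/-- `L_H**(y,q) = sup_{x ∈ Ω̄, p ∈ B_R} {⟨y,p⟩ + ⟨q,x⟩ - L_H*(p,x)}`. -/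
def LHstarstar (Ω : Set (EuclideanSpace ℝ (Fin N))) (R : ℝ)
    (H : EuclideanSpace ℝ (Fin N) → EuclideanSpace ℝ (Fin N) → ℝ)
    (y q : EuclideanSpace ℝ (Fin N)) : ℝ :=
  ⨆ x : closure Ω, ⨆ p : Metric.closedBall (0 : EuclideanSpace ℝ (Fin N)) R,
    ((inner ℝ y (p : EuclideanSpace ℝ (Fin N)) : ℝ)
      + (inner ℝ q (x : EuclideanSpace ℝ (Fin N)) : ℝ) - LHstar Ω R H p x)

/-- The `B_R`-Hamiltonian of `L`: `H_L(x,y) = sup_{p ∈ B_R} {⟨x,p⟩ - L(y,p)}`. -/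
def HLB (R : ℝ)
    (L : EuclideanSpace ℝ (Fin N) → EuclideanSpace ℝ (Fin N) → ℝ)
    (x y : EuclideanSpace ℝ (Fin N)) : ℝ :=
  ⨆ p : Metric.closedBall (0 : EuclideanSpace ℝ (Fin N)) R,
    ((inner ℝ x (p : EuclideanSpace ℝ (Fin N)) : ℝ) - L y p)

end

/- Evaluating the supremum defining `L_H(x', p')` at `y = x` and the one defining `L_H(x, p)` at
`y = x'`, and adding, gives `⟨x,p'⟩ + ⟨p,x'⟩ - L_H(x',p') ≤ L_H(x,p) + H(x,x') + H(x',x)`; the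
skew-symmetry inequality makes the last two terms nonpositive. Compactness of `Ω̄` and continuity
of `H` only serve to make the suprema finite. -/

section

variable {N : ℕ} {Ω : Set (EuclideanSpace ℝ (Fin N))}
  {H : EuclideanSpace ℝ (Fin N) → EuclideanSpace ℝ (Fin N) → ℝ}

theorem bddAbove_range_inner_sub_of_isCompact (hΩc : IsCompact (closure Ω))
    (hHcont : ContinuousOn (fun q : EuclideanSpace ℝ (Fin N) × EuclideanSpace ℝ (Fin N) =>
      H q.1 q.2) (closure Ω ×ˢ closure Ω))
    {x : EuclideanSpace ℝ (Fin N)} (hx : x ∈ closure Ω) (p : EuclideanSpace ℝ (Fin N)) :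
    BddAbove (range fun y : closure Ω => inner ℝ (y : EuclideanSpace ℝ (Fin N)) p - H y x) := by
  have : CompactSpace (closure Ω) := isCompact_iff_compactSpace.mp hΩc
  have hHy : Continuous fun y : closure Ω => H y x :=
    hHcont.comp_continuous (continuous_subtype_val.prodMk continuous_const) fun y => ⟨y.2, hx⟩
  exact (isCompact_range ((continuous_subtype_val.inner continuous_const).sub hHy)).bddAbove

theorem inner_sub_le_LH (hΩc : IsCompact (closure Ω))
    (hHcont : ContinuousOn (fun q : EuclideanSpace ℝ (Fin N) × EuclideanSpace ℝ (Fin N) =>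
      H q.1 q.2) (closure Ω ×ˢ closure Ω))
    {x y : EuclideanSpace ℝ (Fin N)} (hx : x ∈ closure Ω) (hy : y ∈ closure Ω)
    (p : EuclideanSpace ℝ (Fin N)) :
    inner ℝ y p - H y x ≤ LH Ω H x p :=
  le_ciSup (f := fun y : closure Ω => inner ℝ (y : EuclideanSpace ℝ (Fin N)) p - H y x)
    (bddAbove_range_inner_sub_of_isCompact hΩc hHcont hx p) ⟨y, hy⟩

theorem inner_add_inner_sub_LH_le_LH (hΩc : IsCompact (closure Ω))
    (hHcont : ContinuousOn (fun q : EuclideanSpace ℝ (Fin N) × EuclideanSpace ℝ (Fin N) =>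
      H q.1 q.2) (closure Ω ×ˢ closure Ω))
    (hHskew : ∀ x ∈ closure Ω, ∀ y ∈ closure Ω, H x y ≤ - H y x)
    {x x' : EuclideanSpace ℝ (Fin N)} (hx : x ∈ closure Ω) (hx' : x' ∈ closure Ω)
    (p p' : EuclideanSpace ℝ (Fin N)) :
    inner ℝ x p' + inner ℝ p x' - LH Ω H x' p' ≤ LH Ω H x p := by
  have h₁ := inner_sub_le_LH hΩc hHcont hx' hx p'
  have h₂ := inner_sub_le_LH hΩc hHcont hx hx' p
  have h₃ := hHskew x hx x' hx'
  rw [real_inner_comm] at h₂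
  linarith

end

open Metric in
theorem LHstar_le_LH_general {N : ℕ} (R : ℝ)
    (Ω : Set (EuclideanSpace ℝ (Fin N)))
    (hΩ : Ω ⊆ Metric.closedBall (0 : EuclideanSpace ℝ (Fin N)) R)
    (H : EuclideanSpace ℝ (Fin N) → EuclideanSpace ℝ (Fin N) → ℝ)
    (hHcont : ContinuousOn (fun q : EuclideanSpace ℝ (Fin N) × EuclideanSpace ℝ (Fin N) =>
      H q.1 q.2) ((closure Ω) ×ˢ (closure Ω)))
    (hHskew : ∀ x ∈ closure Ω, ∀ y ∈ closure Ω, H x y ≤ - H y x) :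
    ∀ x ∈ closure Ω, ∀ p ∈ Metric.closedBall (0 : EuclideanSpace ℝ (Fin N)) R,
      LHstar Ω R H p x ≤ LH Ω H x p := by
  intro x hx p hp
  have hΩc : IsCompact (closure Ω) := (isBounded_closedBall.subset hΩ).isCompact_closure
  have : Nonempty (closure Ω) := ⟨⟨x, hx⟩⟩
  have : Nonempty (closedBall (0 : EuclideanSpace ℝ (Fin N)) R) := ⟨⟨p, hp⟩⟩
  exact ciSup_le fun x' => ciSup_le fun p' =>
    inner_add_inner_sub_LH_le_LH hΩc hHcont hHskew hx x'.2 p p'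

open Metric in
/-- Lemma 2.7 (first part): if `H(x,y) ≤ -H(y,x)` on `Ω̄ × Ω̄`, then
`L_H*(p,x) ≤ L_H(x,p)` for all `x ∈ Ω̄`, `p ∈ B_R`. -/
theorem LHstar_le_LH {N : ℕ} (R : ℝ) (hR : 0 < R)
    (Ω : Set (EuclideanSpace ℝ (Fin N))) (hΩopen : IsOpen Ω)
    (hΩ : Ω ⊆ Metric.closedBall (0 : EuclideanSpace ℝ (Fin N)) R)
    (hΩne : Ω.Nonempty)
    (H : EuclideanSpace ℝ (Fin N) → EuclideanSpace ℝ (Fin N) → ℝ)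
    (hHcont : ContinuousOn (fun q : EuclideanSpace ℝ (Fin N) × EuclideanSpace ℝ (Fin N) =>
      H q.1 q.2) ((closure Ω) ×ˢ (closure Ω)))
    (hHskew : ∀ x ∈ closure Ω, ∀ y ∈ closure Ω, H x y ≤ - H y x) :
    ∀ x ∈ closure Ω, ∀ p ∈ Metric.closedBall (0 : EuclideanSpace ℝ (Fin N)) R,
      LHstar Ω R H p x ≤ LH Ω H x p :=
  LHstar_le_LH_general R Ω hΩ H hHcont hHskew
end

section
/- Define the B_R-Hamiltonian of a convex function L : ℝ^N × ℝ^N → ℝ by H_L(x,y) = sup_{p ∈ B_R} {⟨x,p⟩ − L(y,p)}. If H ∈ C(Ω̄ × Ω̄) satisfies H(x,y) ≤ −H(y,x), then the function H_{L_H**} satisfies H_{L_H**}(x,y) ≤ −H_{L_H**}(y,x) for all x,y ∈ Ω̄. -/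
open MeasureTheory Set

/-!
The skew-symmetry of `H` gives `L_H*(p,x) ≤ L_H(x,p)` on `Ω̄ × B_R`. The restricted conjugate
is antitone, so conjugating once more yields `L_H*(q,y) ≤ L_H**(y,q)`. Together with the
Fenchel–Young inequality `⟨y,q⟩ + ⟨p,x⟩ ≤ L_H**(y,p) + L_H*(q,x)` this gives
`⟨x,p⟩ + ⟨y,q⟩ ≤ L_H**(y,p) + L_H**(x,q)` for all `p, q ∈ B_R`, and taking suprema over `p` and
`q` proves the claim. Continuity of `H` on the compact set `Ω̄ × Ω̄` is only used to make every
supremum finite: a real `⨆` of a family that is not bounded above is `0`.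
-/

open Metric
open scoped RealInnerProductSpace

theorem ciSup_le_neg_ciSup_of_add_nonpos {ι κ : Sort*} [Nonempty ι] [Nonempty κ]
    {f : ι → ℝ} {g : κ → ℝ} (h : ∀ i j, f i + g j ≤ 0) : ⨆ i, f i ≤ -⨆ j, g j :=
  ciSup_le fun i => le_neg.mp <| ciSup_le fun j => by linarith [h i j]

theorem le_ciSup₂_of_forall_le {ι κ : Sort*} {f : ι → κ → ℝ} {M : ℝ}
    (h : ∀ i j, f i j ≤ M) (i : ι) (j : κ) : f i j ≤ ⨆ (i) (j), f i j :=
  le_ciSup₂ (f := f) ⟨M, fun _ hr => by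
    obtain ⟨i, j, rfl⟩ := by simpa only [mem_iUnion, mem_range] using hr
    exact h i j⟩ i j

section RestrictedConj

variable {E : Type*} [NormedAddCommGroup E] [InnerProductSpace ℝ E]

theorem abs_real_inner_le_norm_mul_of_mem_closedBall {R : ℝ} (y : E) {p : E}
    (hp : p ∈ closedBall (0 : E) R) : |⟪y, p⟫| ≤ ‖y‖ * R :=
  (abs_real_inner_le_norm y p).trans <|
    mul_le_mul_of_nonneg_left (mem_closedBall_zero_iff.mp hp) (norm_nonneg y)

noncomputable def restrictedConj (K B : Set E) (g : E → E → ℝ) (q y : E) : ℝ :=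
  ⨆ x : K, ⨆ p : B, (⟪y, (p : E)⟫ + ⟪q, (x : E)⟫ - g x p)

variable {K B : Set E} {R : ℝ}

theorem le_restrictedConj (hK : K ⊆ closedBall 0 R) (hB : B ⊆ closedBall 0 R) {g : E → E → ℝ}
    (hg : BddBelow (image2 g K B)) {x p : E} (hx : x ∈ K) (hp : p ∈ B) (q y : E) :
    ⟪y, p⟫ + ⟪q, x⟫ - g x p ≤ restrictedConj K B g q y := by
  obtain ⟨m, hm⟩ := hg
  refine le_ciSup₂_of_forall_le (f := fun (x : K) (p : B) => ⟪y, (p : E)⟫ + ⟪q, (x : E)⟫ - g x p)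
    (M := ‖y‖ * R + ‖q‖ * R - m) (fun x p => ?_) ⟨x, hx⟩ ⟨p, hp⟩
  have hyp := (abs_le.mp (abs_real_inner_le_norm_mul_of_mem_closedBall y (hB p.2))).2
  have hqx := (abs_le.mp (abs_real_inner_le_norm_mul_of_mem_closedBall q (hK x.2))).2
  have hgxp := hm (mem_image2_of_mem x.2 p.2)
  linarith

theorem restrictedConj_le_restrictedConj (hK : K ⊆ closedBall 0 R) (hB : B ⊆ closedBall 0 R)
    [Nonempty K] [Nonempty B] {g₁ g₂ : E → E → ℝ} (hg₁ : BddBelow (image2 g₁ K B))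
    (h : ∀ x ∈ K, ∀ p ∈ B, g₁ x p ≤ g₂ x p) (q y : E) :
    restrictedConj K B g₂ q y ≤ restrictedConj K B g₁ q y :=
  ciSup_le fun x => ciSup_le fun p =>
    (sub_le_sub_left (h x x.2 p p.2) _).trans (le_restrictedConj hK hB hg₁ x.2 p.2 q y)

end RestrictedConj

section Lagrangian

variable {N : ℕ} {R : ℝ} {Ω : Set (EuclideanSpace ℝ (Fin N))}
  {H : EuclideanSpace ℝ (Fin N) → EuclideanSpace ℝ (Fin N) → ℝ}

theorem LHstar_eq_restrictedConj (q y : EuclideanSpace ℝ (Fin N)) :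
    LHstar Ω R H q y = restrictedConj (closure Ω) (closedBall 0 R) (LH Ω H) q y :=
  rfl

theorem LHstarstar_eq_restrictedConj (y q : EuclideanSpace ℝ (Fin N)) :
    LHstarstar Ω R H y q =
      restrictedConj (closure Ω) (closedBall 0 R) (fun x p => LHstar Ω R H p x) q y :=
  rfl

variable (hK : closure Ω ⊆ closedBall 0 R)
include hK

theorem le_LH (hH : BddBelow (image2 H (closure Ω) (closure Ω))) {x a : EuclideanSpace ℝ (Fin N)}
    (hx : x ∈ closure Ω) (ha : a ∈ closure Ω) (p : EuclideanSpace ℝ (Fin N)) :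
    ⟪a, p⟫ - H a x ≤ LH Ω H x p := by
  obtain ⟨m, hm⟩ := hH
  refine le_ciSup (f := fun y : closure Ω => ⟪(y : EuclideanSpace ℝ (Fin N)), p⟫ - H y x)
    ⟨‖p‖ * R - m, ?_⟩ ⟨a, ha⟩
  rintro _ ⟨y, rfl⟩
  have hyp := (abs_le.mp (abs_real_inner_le_norm_mul_of_mem_closedBall p (hK y.2))).2
  have hHyx := hm (mem_image2_of_mem y.2 hx)
  rw [real_inner_comm] at hyp
  linarith

theorem bddBelow_LH (hHb : BddBelow (image2 H (closure Ω) (closure Ω)))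
    (hHa : BddAbove (image2 H (closure Ω) (closure Ω))) {x₀ : EuclideanSpace ℝ (Fin N)}
    (hx₀ : x₀ ∈ closure Ω) : BddBelow (image2 (LH Ω H) (closure Ω) (closedBall 0 R)) := by
  obtain ⟨C, hC⟩ := hHa
  refine ⟨-(‖x₀‖ * R) - C, forall_mem_image2.mpr fun x hx p hp => ?_⟩
  have hx₀p := (abs_le.mp (abs_real_inner_le_norm_mul_of_mem_closedBall x₀ hp)).1
  have hHx₀x := hC (mem_image2_of_mem hx₀ hx)
  linarith [le_LH hK hHb hx hx₀ p]

theorem bddBelow_LHstar (hHb : BddBelow (image2 H (closure Ω) (closure Ω)))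
    (hHa : BddAbove (image2 H (closure Ω) (closure Ω))) {x₀ : EuclideanSpace ℝ (Fin N)}
    (hx₀ : x₀ ∈ closure Ω) :
    BddBelow (image2 (fun x p => LHstar Ω R H p x) (closure Ω) (closedBall 0 R)) := by
  refine ⟨-(‖x₀‖ * R) - ‖x₀‖ * R - LH Ω H x₀ x₀,
    forall_mem_image2.mpr fun x hx p hp => ?_⟩
  have hxx₀ := (abs_le.mp (abs_real_inner_le_norm_mul_of_mem_closedBall x₀ (hK hx))).1
  have hpx₀ := (abs_le.mp (abs_real_inner_le_norm_mul_of_mem_closedBall x₀ hp)).1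
  have hFY := le_restrictedConj hK subset_rfl (bddBelow_LH hK hHb hHa hx₀) hx₀ (hK hx₀) p x
  rw [← LHstar_eq_restrictedConj] at hFY
  linarith [real_inner_comm x x₀, real_inner_comm p x₀]

theorem LHstar_le_LH_s10 (hHb : BddBelow (image2 H (closure Ω) (closure Ω)))
    (hskew : ∀ x ∈ closure Ω, ∀ y ∈ closure Ω, H x y ≤ -H y x) [Nonempty (closure Ω)]
    {x : EuclideanSpace ℝ (Fin N)} (hx : x ∈ closure Ω) (p : EuclideanSpace ℝ (Fin N)) :
    LHstar Ω R H p x ≤ LH Ω H x p := by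
  refine ciSup_le fun a => ?_
  have : Nonempty (closedBall (0 : EuclideanSpace ℝ (Fin N)) R) := ⟨⟨a, hK a.2⟩⟩
  refine ciSup_le fun b => ?_
  calc ⟪x, (b : EuclideanSpace ℝ (Fin N))⟫ + ⟪p, (a : EuclideanSpace ℝ (Fin N))⟫ - LH Ω H a b
      ≤ ⟪(a : EuclideanSpace ℝ (Fin N)), p⟫ + H x a := by
        rw [real_inner_comm p]; linarith [le_LH hK hHb a.2 hx b]
    _ ≤ ⟪(a : EuclideanSpace ℝ (Fin N)), p⟫ - H a x := by linarith [hskew x hx a a.2]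
    _ ≤ LH Ω H x p := le_LH hK hHb hx a.2 p

theorem LHstar_le_LHstarstar (hHb : BddBelow (image2 H (closure Ω) (closure Ω)))
    (hHa : BddAbove (image2 H (closure Ω) (closure Ω)))
    (hskew : ∀ x ∈ closure Ω, ∀ y ∈ closure Ω, H x y ≤ -H y x) {x₀ : EuclideanSpace ℝ (Fin N)}
    (hx₀ : x₀ ∈ closure Ω) (q y : EuclideanSpace ℝ (Fin N)) :
    LHstar Ω R H q y ≤ LHstarstar Ω R H y q := by
  have : Nonempty (closure Ω) := ⟨⟨x₀, hx₀⟩⟩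
  have : Nonempty (closedBall (0 : EuclideanSpace ℝ (Fin N)) R) := ⟨⟨x₀, hK hx₀⟩⟩
  exact restrictedConj_le_restrictedConj hK subset_rfl (bddBelow_LHstar hK hHb hHa hx₀)
    (fun x hx p _ => LHstar_le_LH_s10 hK hHb hskew hx p) q y

theorem inner_add_inner_le_LHstarstar_add_LHstarstar
    (hHb : BddBelow (image2 H (closure Ω) (closure Ω)))
    (hHa : BddAbove (image2 H (closure Ω) (closure Ω)))
    (hskew : ∀ x ∈ closure Ω, ∀ y ∈ closure Ω, H x y ≤ -H y x)
    {x q : EuclideanSpace ℝ (Fin N)} (hx : x ∈ closure Ω) (hq : q ∈ closedBall 0 R)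
    (y p : EuclideanSpace ℝ (Fin N)) :
    ⟪x, p⟫ + ⟪y, q⟫ ≤ LHstarstar Ω R H y p + LHstarstar Ω R H x q := by
  have hFY := le_restrictedConj hK subset_rfl (bddBelow_LHstar hK hHb hHa hx) hx hq p y
  rw [← LHstarstar_eq_restrictedConj] at hFY
  linarith [LHstar_le_LHstarstar hK hHb hHa hskew hx q x, real_inner_comm x p]

end Lagrangian

theorem HLB_LHstarstar_skew_general {N : ℕ} (R : ℝ)
    (Ω : Set (EuclideanSpace ℝ (Fin N)))
    (hΩ : Ω ⊆ Metric.closedBall (0 : EuclideanSpace ℝ (Fin N)) R)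
    (hΩne : Ω.Nonempty)
    (H : EuclideanSpace ℝ (Fin N) → EuclideanSpace ℝ (Fin N) → ℝ)
    (hHcont : ContinuousOn (fun q : EuclideanSpace ℝ (Fin N) × EuclideanSpace ℝ (Fin N) =>
      H q.1 q.2) ((closure Ω) ×ˢ (closure Ω)))
    (hHskew : ∀ x ∈ closure Ω, ∀ y ∈ closure Ω, H x y ≤ - H y x) :
    ∀ x ∈ closure Ω, ∀ y ∈ closure Ω,
      HLB R (LHstarstar Ω R H) x y ≤ - HLB R (LHstarstar Ω R H) y x := by
  intro x hx y _
  have hK : closure Ω ⊆ closedBall 0 R := closure_minimal hΩ isClosed_closedBall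
  have hKc : IsCompact (closure Ω ×ˢ closure Ω) :=
    have := (isCompact_closedBall (0 : EuclideanSpace ℝ (Fin N)) R).of_isClosed_subset
      isClosed_closure hK
    this.prod this
  have hHb := image_uncurry_prod H _ _ ▸ hKc.bddBelow_image hHcont
  have hHa := image_uncurry_prod H _ _ ▸ hKc.bddAbove_image hHcont
  obtain ⟨x₀, hx₀⟩ := hΩne
  have : Nonempty (closedBall (0 : EuclideanSpace ℝ (Fin N)) R) := ⟨⟨x₀, hΩ hx₀⟩⟩
  exact ciSup_le_neg_ciSup_of_add_nonpos fun p q => by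
    linarith [inner_add_inner_le_LHstarstar_add_LHstarstar hK hHb hHa hHskew hx q.2 y p]

/-- Lemma 2.6: if `H(x,y) ≤ -H(y,x)` on `Ω̄ × Ω̄`, then the `B_R`-Hamiltonian of
`L_H**` satisfies the same skew-symmetry inequality on `Ω̄ × Ω̄`. -/
theorem HLB_LHstarstar_skew {N : ℕ} (R : ℝ) (hR : 0 < R)
    (Ω : Set (EuclideanSpace ℝ (Fin N))) (hΩopen : IsOpen Ω)
    (hΩ : Ω ⊆ Metric.closedBall (0 : EuclideanSpace ℝ (Fin N)) R)
    (hΩne : Ω.Nonempty)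
    (H : EuclideanSpace ℝ (Fin N) → EuclideanSpace ℝ (Fin N) → ℝ)
    (hHcont : ContinuousOn (fun q : EuclideanSpace ℝ (Fin N) × EuclideanSpace ℝ (Fin N) =>
      H q.1 q.2) ((closure Ω) ×ˢ (closure Ω)))
    (hHskew : ∀ x ∈ closure Ω, ∀ y ∈ closure Ω, H x y ≤ - H y x) :
    ∀ x ∈ closure Ω, ∀ y ∈ closure Ω,
      HLB R (LHstarstar Ω R H) x y ≤ - HLB R (LHstarstar Ω R H) y x :=
  HLB_LHstarstar_skew_general R Ω hΩ hΩne H hHcont hHskew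
end

section
/- If H ∈ C(Ω̄ × Ω̄) with H(x,y) ≤ −H(y,x), then L_H** is Lipschitz on ℝ^N × ℝ^N with Lipschitz constant at most 4NR, and H_{L_H**} is Lipschitz on ℝ^N × ℝ^N with Lipschitz constant at most 4NR. -/
open MeasureTheory Set

section Helpers


/-! Each of `L_H**` and `H_{L_H**}` is a supremum of functions that are affine in the pair of
arguments, with both slopes in a ball of radius `R`; such a supremum is `R`-Lipschitz for the
norm `‖x‖ + ‖y‖` as soon as it is finite. Finiteness comes from the boundedness of `H` on the
compact set `Ω̄ × Ω̄`, which propagates through `L_H` and `L_H*`. -/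

open Metric

section LipschitzWithL1

variable {E F : Type*} [SeminormedAddCommGroup E] [SeminormedAddCommGroup F]

def LipschitzWithL1 (K : ℝ) (f : E → F → ℝ) : Prop :=
  ∀ x₁ y₁ x₂ y₂, |f x₁ y₁ - f x₂ y₂| ≤ K * (‖x₁ - x₂‖ + ‖y₁ - y₂‖)

theorem LipschitzWithL1.mono {K K' : ℝ} {f : E → F → ℝ} (hf : LipschitzWithL1 K f)
    (hK : K ≤ K') : LipschitzWithL1 K' f := fun x₁ y₁ x₂ y₂ =>
  (hf x₁ y₁ x₂ y₂).trans (mul_le_mul_of_nonneg_right hK (by positivity))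

theorem LipschitzWithL1.of_subsingleton [Subsingleton E] [Subsingleton F] (K : ℝ)
    (f : E → F → ℝ) : LipschitzWithL1 K f := fun x₁ y₁ x₂ y₂ => by
  simp [Subsingleton.elim x₁ x₂, Subsingleton.elim y₁ y₂]

theorem abs_ciSup_sub_ciSup_le {ι : Type*} [Nonempty ι] {f g : ι → ℝ} {c : ℝ}
    (hf : BddAbove (range f)) (hg : BddAbove (range g)) (h : ∀ i, |f i - g i| ≤ c) :
    |(⨆ i, f i) - ⨆ i, g i| ≤ c := by
  rw [abs_sub_le_iff]
  constructor <;> rw [sub_le_iff_le_add] <;> refine ciSup_le fun i => ?_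
  · linarith [(abs_sub_le_iff.1 (h i)).1, le_ciSup hg i]
  · linarith [(abs_sub_le_iff.1 (h i)).2, le_ciSup hf i]

theorem abs_ciSup_le {ι : Type*} [Nonempty ι] {f : ι → ℝ} {C : ℝ} (h : ∀ i, |f i| ≤ C) :
    |⨆ i, f i| ≤ C := by
  have hbdd : BddAbove (range f) := ⟨C, forall_mem_range.2 fun i => (abs_le.1 (h i)).2⟩
  obtain ⟨i⟩ := ‹Nonempty ι›
  exact abs_le.2 ⟨(abs_le.1 (h i)).1.trans (le_ciSup hbdd i), ciSup_le fun i => (abs_le.1 (h i)).2⟩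

theorem LipschitzWithL1.ciSup {ι : Type*} [Nonempty ι] {K : ℝ} {f : ι → E → F → ℝ}
    (hf : ∀ i, LipschitzWithL1 K (f i)) (hbdd : ∀ x y, BddAbove (range fun i => f i x y)) :
    LipschitzWithL1 K fun x y => ⨆ i, f i x y := fun x₁ y₁ x₂ y₂ =>
  abs_ciSup_sub_ciSup_le (hbdd x₁ y₁) (hbdd x₂ y₂) fun i => hf i x₁ y₁ x₂ y₂

theorem LipschitzWithL1.ciSup₂ {ι κ : Type*} [Nonempty ι] [Nonempty κ] {K : ℝ}
    {f : ι → κ → E → F → ℝ} (hf : ∀ i j, LipschitzWithL1 K (f i j))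
    (hbdd : ∀ x y, ∃ B, ∀ i j, f i j x y ≤ B) :
    LipschitzWithL1 K fun x y => ⨆ i, ⨆ j, f i j x y := by
  refine .ciSup (fun i => .ciSup (hf i) fun x y => ?_) fun x y => ?_ <;>
    obtain ⟨B, hB⟩ := hbdd x y
  · exact ⟨B, forall_mem_range.2 (hB i)⟩
  · exact ⟨B, forall_mem_range.2 fun i => ciSup_le (hB i)⟩

end LipschitzWithL1

section InnerProduct

variable {E : Type*} [NormedAddCommGroup E] [InnerProductSpace ℝ E]

theorem abs_real_inner_le_of_norm_le {x y : E} {a b : ℝ} (hx : ‖x‖ ≤ a) (hy : ‖y‖ ≤ b) :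
    |inner ℝ x y| ≤ a * b :=
  (abs_real_inner_le_norm x y).trans
    (mul_le_mul hx hy (norm_nonneg y) ((norm_nonneg x).trans hx))

theorem lipschitzWithL1_inner_add_inner_sub {R : ℝ} {a b : E} (ha : ‖a‖ ≤ R) (hb : ‖b‖ ≤ R)
    (c : ℝ) : LipschitzWithL1 R fun y q : E => inner ℝ y a + inner ℝ q b - c :=
  fun y₁ q₁ y₂ q₂ => by
  have key : inner ℝ y₁ a + inner ℝ q₁ b - c - (inner ℝ y₂ a + inner ℝ q₂ b - c)
      = inner ℝ (y₁ - y₂) a + inner ℝ (q₁ - q₂) b := by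
    rw [inner_sub_left, inner_sub_left]; ring
  rw [key, mul_add, mul_comm R, mul_comm R]
  exact (abs_add_le _ _).trans (add_le_add
    (abs_real_inner_le_of_norm_le le_rfl ha) (abs_real_inner_le_of_norm_le le_rfl hb))

end InnerProduct

section RestrictedConjugates

variable {N : ℕ} {Ω : Set (EuclideanSpace ℝ (Fin N))} {R M : ℝ}
  {H : EuclideanSpace ℝ (Fin N) → EuclideanSpace ℝ (Fin N) → ℝ}

theorem abs_LH_le (hΩ : closure Ω ⊆ closedBall 0 R) [Nonempty (closure Ω)]
    {x p : EuclideanSpace ℝ (Fin N)} (hM : ∀ y ∈ closure Ω, |H y x| ≤ M) (hp : ‖p‖ ≤ R) :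
    |LH Ω H x p| ≤ R * R + M := by
  unfold LH
  exact abs_ciSup_le fun y => (abs_sub _ _).trans <| add_le_add
    (abs_real_inner_le_of_norm_le (mem_closedBall_zero_iff.1 (hΩ y.2)) hp) (hM y y.2)

theorem abs_LHstar_le (hR : 0 ≤ R) (hΩ : closure Ω ⊆ closedBall 0 R) [Nonempty (closure Ω)]
    (hM : ∀ x ∈ closure Ω, ∀ y ∈ closure Ω, |H x y| ≤ M) {q y : EuclideanSpace ℝ (Fin N)}
    (hq : ‖q‖ ≤ R) (hy : ‖y‖ ≤ R) : |LHstar Ω R H q y| ≤ 3 * (R * R) + M := by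
  have : Nonempty (closedBall (0 : EuclideanSpace ℝ (Fin N)) R) :=
    ⟨⟨0, mem_closedBall_self hR⟩⟩
  unfold LHstar
  refine abs_ciSup_le fun x => abs_ciSup_le fun p => ?_
  have hx : ‖(x : EuclideanSpace ℝ (Fin N))‖ ≤ R := mem_closedBall_zero_iff.1 (hΩ x.2)
  have hp : ‖(p : EuclideanSpace ℝ (Fin N))‖ ≤ R := mem_closedBall_zero_iff.1 p.2
  calc _ ≤ |inner ℝ y (p : EuclideanSpace ℝ (Fin N)) + inner ℝ q (x : EuclideanSpace ℝ (Fin N))|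
        + |LH Ω H x p| := abs_sub _ _
    _ ≤ R * R + R * R + (R * R + M) := by
      gcongr
      · exact (abs_add_le _ _).trans (add_le_add (abs_real_inner_le_of_norm_le hy hp)
          (abs_real_inner_le_of_norm_le hq hx))
      · exact abs_LH_le hΩ (fun y hy' => hM y hy' x x.2) hp
    _ = 3 * (R * R) + M := by ring

theorem lipschitzWithL1_LHstarstar (hR : 0 ≤ R) (hΩ : closure Ω ⊆ closedBall 0 R)
    [Nonempty (closure Ω)] (hM : ∀ x ∈ closure Ω, ∀ y ∈ closure Ω, |H x y| ≤ M) :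
    LipschitzWithL1 R (LHstarstar Ω R H) := by
  have : Nonempty (closedBall (0 : EuclideanSpace ℝ (Fin N)) R) :=
    ⟨⟨0, mem_closedBall_self hR⟩⟩
  have hx (x : closure Ω) : ‖(x : EuclideanSpace ℝ (Fin N))‖ ≤ R :=
    mem_closedBall_zero_iff.1 (hΩ x.2)
  have hp (p : closedBall (0 : EuclideanSpace ℝ (Fin N)) R) :
      ‖(p : EuclideanSpace ℝ (Fin N))‖ ≤ R := mem_closedBall_zero_iff.1 p.2
  refine .ciSup₂ (fun x p => lipschitzWithL1_inner_add_inner_sub (hp p) (hx x) _)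
    fun y q => ⟨‖y‖ * R + ‖q‖ * R + (3 * (R * R) + M), fun x p => ?_⟩
  have hyp := (le_abs_self _).trans (abs_real_inner_le_of_norm_le le_rfl (hp p) :
    |inner ℝ y (p : EuclideanSpace ℝ (Fin N))| ≤ _)
  have hqx := (le_abs_self _).trans (abs_real_inner_le_of_norm_le le_rfl (hx x) :
    |inner ℝ q (x : EuclideanSpace ℝ (Fin N))| ≤ _)
  have hstar := neg_le_of_abs_le (abs_LHstar_le hR hΩ hM (hp p) (hx x))
  linarith

theorem LipschitzWithL1.HLB (hR : 0 ≤ R)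
    {L : EuclideanSpace ℝ (Fin N) → EuclideanSpace ℝ (Fin N) → ℝ} (hL : LipschitzWithL1 R L) :
    LipschitzWithL1 R (HLB R L) := by
  have : Nonempty (closedBall (0 : EuclideanSpace ℝ (Fin N)) R) :=
    ⟨⟨0, mem_closedBall_self hR⟩⟩
  refine .ciSup (fun p => ?_) fun x y =>
    ⟨‖x‖ * R + (R * R - L y 0), forall_mem_range.2 fun p => ?_⟩
  · have hp : ‖(p : EuclideanSpace ℝ (Fin N))‖ ≤ R := mem_closedBall_zero_iff.1 p.2
    intro x₁ y₁ x₂ y₂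
    have hL' := hL y₁ p y₂ p
    rw [sub_self, norm_zero, add_zero] at hL'
    have key : inner ℝ x₁ (p : EuclideanSpace ℝ (Fin N)) - L y₁ p
        - (inner ℝ x₂ (p : EuclideanSpace ℝ (Fin N)) - L y₂ p)
        = inner ℝ (x₁ - x₂) (p : EuclideanSpace ℝ (Fin N)) - (L y₁ p - L y₂ p) := by
      rw [inner_sub_left]; ring
    rw [key, mul_add, mul_comm R ‖x₁ - x₂‖]
    exact (abs_sub _ _).trans (add_le_add (abs_real_inner_le_of_norm_le le_rfl hp) hL')
  · have hp : ‖(p : EuclideanSpace ℝ (Fin N))‖ ≤ R := mem_closedBall_zero_iff.1 p.2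
    have hL' := hL y 0 y p
    rw [sub_self, norm_zero, zero_add, zero_sub, norm_neg] at hL'
    have hxp := (le_abs_self _).trans (abs_real_inner_le_of_norm_le le_rfl hp :
      |inner ℝ x (p : EuclideanSpace ℝ (Fin N))| ≤ _)
    have hLp := (le_abs_self _).trans (hL'.trans (mul_le_mul_of_nonneg_left hp hR))
    linarith

end RestrictedConjugates

theorem LHstarstar_lipschitz_general {N : ℕ} (R : ℝ) (hR : 0 < R)
    (Ω : Set (EuclideanSpace ℝ (Fin N)))
    (hΩ : Ω ⊆ Metric.closedBall (0 : EuclideanSpace ℝ (Fin N)) R)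
    (hΩne : Ω.Nonempty)
    (H : EuclideanSpace ℝ (Fin N) → EuclideanSpace ℝ (Fin N) → ℝ)
    (hHcont : ContinuousOn (fun q : EuclideanSpace ℝ (Fin N) × EuclideanSpace ℝ (Fin N) =>
      H q.1 q.2) ((closure Ω) ×ˢ (closure Ω))) :
    (∀ x₁ p₁ x₂ p₂ : EuclideanSpace ℝ (Fin N),
      |LHstarstar Ω R H x₁ p₁ - LHstarstar Ω R H x₂ p₂|
        ≤ 4 * N * R * (‖x₁ - x₂‖ + ‖p₁ - p₂‖)) ∧
    (∀ x₁ y₁ x₂ y₂ : EuclideanSpace ℝ (Fin N),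
      |HLB R (LHstarstar Ω R H) x₁ y₁ - HLB R (LHstarstar Ω R H) x₂ y₂|
        ≤ 4 * N * R * (‖x₁ - x₂‖ + ‖y₁ - y₂‖)) := by
  have hΩ' : closure Ω ⊆ closedBall 0 R := closure_minimal hΩ isClosed_closedBall
  have := hΩne.closure.to_subtype
  have hK : IsCompact (closure Ω) :=
    (isCompact_closedBall _ R).of_isClosed_subset isClosed_closure hΩ'
  obtain ⟨M, hM⟩ := (hK.prod hK).exists_bound_of_continuousOn hHcont
  have hL := lipschitzWithL1_LHstarstar hR.le hΩ' fun x hx y hy => hM (x, y) ⟨hx, hy⟩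
  rcases N.eq_zero_or_pos with rfl | hN
  · exact ⟨LipschitzWithL1.of_subsingleton _ _, LipschitzWithL1.of_subsingleton _ _⟩
  · have h4NR : R ≤ 4 * N * R :=
      le_mul_of_one_le_left hR.le (by norm_cast; omega)
    exact ⟨hL.mono h4NR, (hL.HLB hR.le).mono h4NR⟩

/-- Lemma 2.9 (2): `L_H**` and `H_{L_H**}` are Lipschitz on `ℝ^N × ℝ^N` with
Lipschitz constant at most `4NR`. -/
theorem LHstarstar_lipschitz {N : ℕ} (R : ℝ) (hR : 0 < R)
    (Ω : Set (EuclideanSpace ℝ (Fin N))) (hΩopen : IsOpen Ω)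
    (hΩ : Ω ⊆ Metric.closedBall (0 : EuclideanSpace ℝ (Fin N)) R)
    (hΩne : Ω.Nonempty)
    (H : EuclideanSpace ℝ (Fin N) → EuclideanSpace ℝ (Fin N) → ℝ)
    (hHcont : ContinuousOn (fun q : EuclideanSpace ℝ (Fin N) × EuclideanSpace ℝ (Fin N) =>
      H q.1 q.2) ((closure Ω) ×ˢ (closure Ω)))
    (hHskew : ∀ x ∈ closure Ω, ∀ y ∈ closure Ω, H x y ≤ - H y x) :
    (∀ x₁ p₁ x₂ p₂ : EuclideanSpace ℝ (Fin N),
      |LHstarstar Ω R H x₁ p₁ - LHstarstar Ω R H x₂ p₂|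
        ≤ 4 * N * R * (‖x₁ - x₂‖ + ‖p₁ - p₂‖)) ∧
    (∀ x₁ y₁ x₂ y₂ : EuclideanSpace ℝ (Fin N),
      |HLB R (LHstarstar Ω R H) x₁ y₁ - HLB R (LHstarstar Ω R H) x₂ y₂|
        ≤ 4 * N * R * (‖x₁ - x₂‖ + ‖y₁ - y₂‖)) :=
  LHstarstar_lipschitz_general R hR Ω hΩ hΩne H hHcont
end Helpers
end

section
/- Let H_reg(x,y) = (H_{L_H**}(x,y) − H_{L_H**}(y,x))/2 for H ∈ C(Ω̄ × Ω̄) anti-symmetric. Then L_{H_reg}(x,p) := sup_{y ∈ Ω̄}{⟨y,p⟩ − H_reg(y,x)} satisfies L_{H_reg}(x,p) ≤ L_H**(x,p) ≤ L_H(x,p) for all (x,p) ∈ Ω̄ × B_R. -/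
open MeasureTheory Set

/-! Anti-symmetry of `H` gives `L_H*(p,x) ≤ L_H(x,p)`; replacing `L_H` by `L_H*` in the
supremum defining `L_H*` then gives `L_H*(q,y) ≤ L_H**(y,q)`, while `L_H** ≤ L_H` is
Fenchel–Young. Feeding `L_H* ≤ L_H**` into the supremum defining `H_{L_H**}` yields
`H_{L_H**}(x,y) + H_{L_H**}(y,x) ≤ 0`, hence
`H_reg(y,x) ≥ H_{L_H**}(y,x) ≥ ⟨y,p⟩ - L_H**(x,p)`.
All suprema range over `Ω̄ ⊆ B_R` and `B_R`, where every function involved is bounded, so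
they are genuine suprema in `ℝ`. -/

open RealInnerProductSpace Metric

section BoundedSupremum

variable {ι κ α : Type*} [ConditionallyCompleteLattice α]

theorem le_ciSup_of_le_of_forall_le {f : ι → α} {a M : α} (hM : ∀ i, f i ≤ M) (i : ι)
    (ha : a ≤ f i) : a ≤ ⨆ i, f i :=
  le_ciSup_of_le ⟨M, Set.forall_mem_range.2 hM⟩ i ha

theorem le_ciSup₂_of_le_of_forall_le {f : ι → κ → α} {a M : α} (hM : ∀ i j, f i j ≤ M)
    (i : ι) (j : κ) (ha : a ≤ f i j) : a ≤ ⨆ i, ⨆ j, f i j :=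
  have : Nonempty κ := ⟨j⟩
  le_ciSup_of_le_of_forall_le (fun i => ciSup_le (hM i)) i
    (le_ciSup_of_le_of_forall_le (hM i) j ha)

end BoundedSupremum

theorem abs_inner_le_mul_of_mem_closedBall {E : Type*} [NormedAddCommGroup E]
    [InnerProductSpace ℝ E] {R : ℝ} {a b : E} (ha : a ∈ closedBall 0 R)
    (hb : b ∈ closedBall 0 R) : |⟪a, b⟫| ≤ R * R := by
  rw [mem_closedBall_zero_iff] at ha hb
  exact (abs_real_inner_le_norm a b).trans
    (mul_le_mul ha hb (norm_nonneg b) ((norm_nonneg a).trans ha))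

section Duality

variable {N : ℕ} {Ω : Set (EuclideanSpace ℝ (Fin N))} {R C : ℝ}
  {H : EuclideanSpace ℝ (Fin N) → EuclideanSpace ℝ (Fin N) → ℝ}
  {x y p q : EuclideanSpace ℝ (Fin N)}

theorem inner_sub_le_LH_s15 (hΩ : closure Ω ⊆ closedBall 0 R)
    (hC : ∀ a ∈ closure Ω, ∀ b ∈ closure Ω, |H a b| ≤ C)
    (hx : x ∈ closure Ω) (hp : p ∈ closedBall 0 R) (hy : y ∈ closure Ω) :
    ⟪y, p⟫ - H y x ≤ LH Ω H x p := by
  refine le_ciSup_of_le_of_forall_le (M := R * R + C) (fun z => ?_)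
    (⟨y, hy⟩ : closure Ω) le_rfl
  have hzp := abs_le.1 (abs_inner_le_mul_of_mem_closedBall (hΩ z.2) hp)
  have hzx := abs_le.1 (hC z z.2 x hx)
  linarith

theorem LH_le (hΩ : closure Ω ⊆ closedBall 0 R)
    (hC : ∀ a ∈ closure Ω, ∀ b ∈ closure Ω, |H a b| ≤ C)
    (hx : x ∈ closure Ω) (hp : p ∈ closedBall 0 R) :
    LH Ω H x p ≤ R * R + C := by
  have : Nonempty (closure Ω) := ⟨⟨x, hx⟩⟩
  refine ciSup_le fun z => ?_
  have hzp := abs_le.1 (abs_inner_le_mul_of_mem_closedBall (hΩ z.2) hp)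
  have hzx := abs_le.1 (hC z z.2 x hx)
  linarith

theorem neg_le_LH (hΩ : closure Ω ⊆ closedBall 0 R)
    (hC : ∀ a ∈ closure Ω, ∀ b ∈ closure Ω, |H a b| ≤ C)
    (hx : x ∈ closure Ω) (hp : p ∈ closedBall 0 R) :
    -(R * R) - C ≤ LH Ω H x p := by
  have hxp := abs_le.1 (abs_inner_le_mul_of_mem_closedBall (hΩ hx) hp)
  have hxx := abs_le.1 (hC x hx x hx)
  linarith [inner_sub_le_LH_s15 hΩ hC hx hp hx]

theorem inner_add_inner_sub_le_LHstar (hΩ : closure Ω ⊆ closedBall 0 R)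
    (hC : ∀ a ∈ closure Ω, ∀ b ∈ closure Ω, |H a b| ≤ C)
    (hq : q ∈ closedBall 0 R) (hy : y ∈ closure Ω) (hx : x ∈ closure Ω)
    (hp : p ∈ closedBall 0 R) :
    ⟪y, p⟫ + ⟪q, x⟫ - LH Ω H x p ≤ LHstar Ω R H q y := by
  refine le_ciSup₂_of_le_of_forall_le (M := 3 * (R * R) + C) (fun z w => ?_)
    (⟨x, hx⟩ : closure Ω) (⟨p, hp⟩ : closedBall (0 : EuclideanSpace ℝ (Fin N)) R) le_rfl
  have hyw := abs_le.1 (abs_inner_le_mul_of_mem_closedBall (hΩ hy) w.2)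
  have hqz := abs_le.1 (abs_inner_le_mul_of_mem_closedBall hq (hΩ z.2))
  linarith [neg_le_LH hΩ hC z.2 w.2]

theorem LHstar_le_LH_s15 (hΩ : closure Ω ⊆ closedBall 0 R)
    (hC : ∀ a ∈ closure Ω, ∀ b ∈ closure Ω, |H a b| ≤ C)
    (hH : ∀ a ∈ closure Ω, ∀ b ∈ closure Ω, H a b = -H b a)
    (hx : x ∈ closure Ω) (hp : p ∈ closedBall 0 R) :
    LHstar Ω R H p x ≤ LH Ω H x p := by
  have : Nonempty (closure Ω) := ⟨⟨x, hx⟩⟩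
  have : Nonempty (closedBall (0 : EuclideanSpace ℝ (Fin N)) R) := ⟨⟨p, hp⟩⟩
  refine ciSup_le fun z => ciSup_le fun w => ?_
  -- `L_H(z,w) ≥ ⟨x,w⟩ - H(x,z) = ⟨x,w⟩ + H(z,x)`
  linarith [inner_sub_le_LH_s15 hΩ hC z.2 w.2 hx, inner_sub_le_LH_s15 hΩ hC hx hp z.2, hH x hx z z.2,
    real_inner_comm p (z : EuclideanSpace ℝ (Fin N))]

theorem neg_le_LHstar (hΩ : closure Ω ⊆ closedBall 0 R)
    (hC : ∀ a ∈ closure Ω, ∀ b ∈ closure Ω, |H a b| ≤ C)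
    (hq : q ∈ closedBall 0 R) (hy : y ∈ closure Ω) :
    -(3 * (R * R)) - C ≤ LHstar Ω R H q y := by
  have hyq := abs_le.1 (abs_inner_le_mul_of_mem_closedBall (hΩ hy) hq)
  linarith [inner_add_inner_sub_le_LHstar hΩ hC hq hy hy hq, LH_le hΩ hC hy hq,
    real_inner_comm q y]

theorem inner_add_inner_sub_le_LHstarstar (hΩ : closure Ω ⊆ closedBall 0 R)
    (hC : ∀ a ∈ closure Ω, ∀ b ∈ closure Ω, |H a b| ≤ C)
    (hy : y ∈ closure Ω) (hq : q ∈ closedBall 0 R) (hx : x ∈ closure Ω)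
    (hp : p ∈ closedBall 0 R) :
    ⟪y, p⟫ + ⟪q, x⟫ - LHstar Ω R H p x ≤ LHstarstar Ω R H y q := by
  refine le_ciSup₂_of_le_of_forall_le (M := 5 * (R * R) + C) (fun z w => ?_)
    (⟨x, hx⟩ : closure Ω) (⟨p, hp⟩ : closedBall (0 : EuclideanSpace ℝ (Fin N)) R) le_rfl
  have hyw := abs_le.1 (abs_inner_le_mul_of_mem_closedBall (hΩ hy) w.2)
  have hqz := abs_le.1 (abs_inner_le_mul_of_mem_closedBall hq (hΩ z.2))
  linarith [neg_le_LHstar hΩ hC w.2 z.2]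

theorem LHstar_le_LHstarstar_s15 (hΩ : closure Ω ⊆ closedBall 0 R)
    (hC : ∀ a ∈ closure Ω, ∀ b ∈ closure Ω, |H a b| ≤ C)
    (hH : ∀ a ∈ closure Ω, ∀ b ∈ closure Ω, H a b = -H b a)
    (hy : y ∈ closure Ω) (hq : q ∈ closedBall 0 R) :
    LHstar Ω R H q y ≤ LHstarstar Ω R H y q := by
  have : Nonempty (closure Ω) := ⟨⟨y, hy⟩⟩
  have : Nonempty (closedBall (0 : EuclideanSpace ℝ (Fin N)) R) := ⟨⟨q, hq⟩⟩
  refine ciSup_le fun z => ciSup_le fun w => ?_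
  linarith [LHstar_le_LH_s15 hΩ hC hH z.2 w.2,
    inner_add_inner_sub_le_LHstarstar hΩ hC hy hq z.2 w.2]

theorem LHstarstar_le_LH (hΩ : closure Ω ⊆ closedBall 0 R)
    (hC : ∀ a ∈ closure Ω, ∀ b ∈ closure Ω, |H a b| ≤ C)
    (hx : x ∈ closure Ω) (hp : p ∈ closedBall 0 R) :
    LHstarstar Ω R H x p ≤ LH Ω H x p := by
  have : Nonempty (closure Ω) := ⟨⟨x, hx⟩⟩
  have : Nonempty (closedBall (0 : EuclideanSpace ℝ (Fin N)) R) := ⟨⟨p, hp⟩⟩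
  refine ciSup_le fun z => ciSup_le fun w => ?_
  linarith [inner_add_inner_sub_le_LHstar hΩ hC w.2 z.2 hx hp,
    real_inner_comm x (w : EuclideanSpace ℝ (Fin N)),
    real_inner_comm p (z : EuclideanSpace ℝ (Fin N))]

theorem inner_sub_le_HLB_LHstarstar (hΩ : closure Ω ⊆ closedBall 0 R)
    (hC : ∀ a ∈ closure Ω, ∀ b ∈ closure Ω, |H a b| ≤ C)
    (hH : ∀ a ∈ closure Ω, ∀ b ∈ closure Ω, H a b = -H b a)
    (hy : y ∈ closure Ω) (hx : x ∈ closure Ω) (hp : p ∈ closedBall 0 R) :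
    ⟪y, p⟫ - LHstarstar Ω R H x p ≤ HLB R (LHstarstar Ω R H) y x := by
  refine le_ciSup_of_le_of_forall_le (M := 4 * (R * R) + C) (fun w => ?_)
    (⟨p, hp⟩ : closedBall (0 : EuclideanSpace ℝ (Fin N)) R) le_rfl
  have hyw := abs_le.1 (abs_inner_le_mul_of_mem_closedBall (hΩ hy) w.2)
  linarith [neg_le_LHstar hΩ hC w.2 hx, LHstar_le_LHstarstar_s15 hΩ hC hH hx w.2]

theorem HLB_LHstarstar_add_swap_nonpos (hΩ : closure Ω ⊆ closedBall 0 R)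
    (hC : ∀ a ∈ closure Ω, ∀ b ∈ closure Ω, |H a b| ≤ C)
    (hH : ∀ a ∈ closure Ω, ∀ b ∈ closure Ω, H a b = -H b a)
    (hx : x ∈ closure Ω) (hy : y ∈ closure Ω) :
    HLB R (LHstarstar Ω R H) x y + HLB R (LHstarstar Ω R H) y x ≤ 0 := by
  have : Nonempty (closedBall (0 : EuclideanSpace ℝ (Fin N)) R) := ⟨⟨x, hΩ hx⟩⟩
  have hyx : ∀ p ∈ closedBall 0 R,
      HLB R (LHstarstar Ω R H) y x ≤ LHstarstar Ω R H y p - ⟪x, p⟫ := fun p hp =>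
    ciSup_le fun w => by
      linarith [inner_add_inner_sub_le_LHstarstar hΩ hC hy hp hx w.2,
        LHstar_le_LHstarstar_s15 hΩ hC hH hx w.2, real_inner_comm x p]
  have hxy : HLB R (LHstarstar Ω R H) x y ≤ -HLB R (LHstarstar Ω R H) y x :=
    ciSup_le fun p => by linarith [hyx p p.2]
  linarith

theorem LH_Hreg_le_LHstarstar (hΩ : closure Ω ⊆ closedBall 0 R)
    (hC : ∀ a ∈ closure Ω, ∀ b ∈ closure Ω, |H a b| ≤ C)
    (hH : ∀ a ∈ closure Ω, ∀ b ∈ closure Ω, H a b = -H b a)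
    (hx : x ∈ closure Ω) (hp : p ∈ closedBall 0 R) :
    LH Ω (fun a b => (HLB R (LHstarstar Ω R H) a b - HLB R (LHstarstar Ω R H) b a) / 2) x p
      ≤ LHstarstar Ω R H x p := by
  have : Nonempty (closure Ω) := ⟨⟨x, hx⟩⟩
  refine ciSup_le fun z => ?_
  linarith [inner_sub_le_HLB_LHstarstar hΩ hC hH z.2 hx hp,
    HLB_LHstarstar_add_swap_nonpos hΩ hC hH z.2 hx]

end Duality

theorem LHreg_le_LHstarstar_le_LH_general {N : ℕ} (R : ℝ)
    (Ω : Set (EuclideanSpace ℝ (Fin N)))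
    (hΩ : Ω ⊆ Metric.closedBall (0 : EuclideanSpace ℝ (Fin N)) R)
    (H : EuclideanSpace ℝ (Fin N) → EuclideanSpace ℝ (Fin N) → ℝ)
    (hHcont : ContinuousOn (fun q : EuclideanSpace ℝ (Fin N) × EuclideanSpace ℝ (Fin N) =>
      H q.1 q.2) ((closure Ω) ×ˢ (closure Ω)))
    (hHskew : ∀ x ∈ closure Ω, ∀ y ∈ closure Ω, H x y = - H y x) :
    ∀ x ∈ closure Ω, ∀ p ∈ Metric.closedBall (0 : EuclideanSpace ℝ (Fin N)) R,
      LH Ω (fun a b => (HLB R (LHstarstar Ω R H) a b - HLB R (LHstarstar Ω R H) b a) / 2) x p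
          ≤ LHstarstar Ω R H x p ∧
        LHstarstar Ω R H x p ≤ LH Ω H x p := by
  have hΩ' : closure Ω ⊆ closedBall 0 R := closure_minimal hΩ isClosed_closedBall
  have hK : IsCompact (closure Ω) := (isCompact_closedBall 0 R).of_isClosed_subset
    isClosed_closure hΩ'
  obtain ⟨C, hC⟩ := (hK.prod hK).exists_bound_of_continuousOn hHcont
  have hHC : ∀ a ∈ closure Ω, ∀ b ∈ closure Ω, |H a b| ≤ C := fun a ha b hb =>
    hC (a, b) ⟨ha, hb⟩
  intro x hx p hp
  exact ⟨LH_Hreg_le_LHstarstar hΩ' hHC hHskew hx hp, LHstarstar_le_LH hΩ' hHC hx hp⟩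

/-- Proposition 2.4 (2): with `H_reg(x,y) = (H_{L_H**}(x,y) - H_{L_H**}(y,x))/2`,
one has `L_{H_reg}(x,p) ≤ L_H**(x,p) ≤ L_H(x,p)` on `Ω̄ × B_R`. -/
theorem LHreg_le_LHstarstar_le_LH {N : ℕ} (R : ℝ) (hR : 0 < R)
    (Ω : Set (EuclideanSpace ℝ (Fin N))) (hΩopen : IsOpen Ω)
    (hΩ : Ω ⊆ Metric.closedBall (0 : EuclideanSpace ℝ (Fin N)) R)
    (hΩne : Ω.Nonempty)
    (H : EuclideanSpace ℝ (Fin N) → EuclideanSpace ℝ (Fin N) → ℝ)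
    (hHcont : ContinuousOn (fun q : EuclideanSpace ℝ (Fin N) × EuclideanSpace ℝ (Fin N) =>
      H q.1 q.2) ((closure Ω) ×ˢ (closure Ω)))
    (hHskew : ∀ x ∈ closure Ω, ∀ y ∈ closure Ω, H x y = - H y x) :
    ∀ x ∈ closure Ω, ∀ p ∈ Metric.closedBall (0 : EuclideanSpace ℝ (Fin N)) R,
      LH Ω (fun a b => (HLB R (LHstarstar Ω R H) a b - HLB R (LHstarstar Ω R H) b a) / 2) x p
          ≤ LHstarstar Ω R H x p ∧
        LHstarstar Ω R H x p ≤ LH Ω H x p :=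
  LHreg_le_LHstarstar_le_LH_general R Ω hΩ H hHcont hHskew
end
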